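/- Plotkin bound (distance form) for the overweight: Let R be a finite local ring with maximal ideal J satisfying |J| ≥ 2, set η = 2(1 - 1/|J|), and let C ⊆ R^n be a (not necessarily linear) code with |C| ≥ 2 and minimum overweight distance d. Then d ≤ |C| n η / (|C| - 1). -/

import Mathlib

open Classical in
noncomputable def overweight {R : Type*} [Ring R] (x : R) : ℝ :=
  if x = 0 then 0 else if IsUnit x then 1 else 2

noncomputable def overweightN {R : Type*} [Ring R] {n : ℕ} (x : Fin n → R) : ℝ :=
  ∑ i, overweight (x i)

noncomputable def owDist {R : Type*} [Ring R] {n : ℕ} (x y : Fin n → R) : ℝ :=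
  overweightN (x - y)

/-!
Sum the distance over all ordered pairs of codewords. The sum is at least `|C|(|C|-1)d`, and it
splits over coordinates. In a coordinate with values `g x`, `W(a - b) = 1 - 2[a = b] + [a ≡ b mod J]`,
so the coordinate contributes `|C|² - 2E + P`, where `E` and `P` count the pairs agreeing in `R` and
in `R/J`. Cauchy–Schwarz over the cosets of `J` gives `P ≤ |J| E`, and `P ≤ |C|²`; together with
`|J| ≥ 2` this bounds the contribution by `η|C|²`.
-/

open Finset

section Collisions

variable {α β γ : Type*} [DecidableEq β] [DecidableEq γ]

def collisionCount (C : Finset α) (f : α → β) : ℕ :=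
  #{p ∈ C ×ˢ C | f p.1 = f p.2}

theorem collisionCount_le_card_sq (C : Finset α) (f : α → β) : collisionCount C f ≤ #C ^ 2 := by
  rw [collisionCount, sq, ← card_product]
  exact card_filter_le _ _

theorem collisionCount_eq_sum_sq [Fintype β] (C : Finset α) (f : α → β) :
    collisionCount C f = ∑ b, #{x ∈ C | f x = b} ^ 2 := by
  rw [collisionCount, card_eq_sum_card_fiberwise (f := fun p => f p.1) (t := univ) (by simp)]
  refine sum_congr rfl fun b _ => ?_
  rw [sq, ← card_product, filter_filter]
  congr 1
  ext ⟨x, y⟩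
  simp only [mem_filter, mem_product]
  grind

theorem collisionCount_comp_le [Fintype β] [Fintype γ] (C : Finset α) (f : α → β) {π : β → γ}
    {k : ℕ} (hπ : ∀ c, #{b | π b = c} ≤ k) :
    collisionCount C (π ∘ f) ≤ k * collisionCount C f := by
  rw [collisionCount_eq_sum_sq, collisionCount_eq_sum_sq, ← sum_fiberwise univ π, mul_sum]
  gcongr with c
  have hfiber : #{x ∈ C | (π ∘ f) x = c} = ∑ b with π b = c, #{x ∈ C | f x = b} := by
    rw [card_eq_sum_card_fiberwise (f := f) (t := {b | π b = c}) fun x hx => by simp_all]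
    refine sum_congr rfl fun b hb => ?_
    rw [filter_filter]
    congr 1
    ext x
    simp only [mem_filter, Function.comp_apply] at hb ⊢
    grind
  calc #{x ∈ C | (π ∘ f) x = c} ^ 2
      = (∑ b with π b = c, #{x ∈ C | f x = b}) ^ 2 := by rw [hfiber]
    _ ≤ #{b | π b = c} * ∑ b with π b = c, #{x ∈ C | f x = b} ^ 2 := sq_sum_le_card_mul_sum_sq
    _ ≤ k * ∑ b with π b = c, #{x ∈ C | f x = b} ^ 2 := by gcongr; exact hπ c

theorem collisionCount_quotient_le {G : Type*} [AddCommGroup G] [Fintype G] [DecidableEq G]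
    (H : AddSubgroup G) [DecidableEq (G ⧸ H)] (C : Finset α) (f : α → G) :
    collisionCount C (((↑) : G → G ⧸ H) ∘ f) ≤ Nat.card H * collisionCount C f := by
  have : Fintype (G ⧸ H) := Fintype.ofFinite _
  refine collisionCount_comp_le C f fun c => le_of_eq ?_
  rw [← Nat.card_eq_finsetCard, ← Nat.card_congr
    ((QuotientAddGroup.preimageMkEquivAddSubgroupProdSet H {c}).trans (Equiv.prodUnique _ _))]
  congr
  ext
  simp

end Collisions

section LocalRing

variable {α R : Type*} [Ring R]

theorem overweight_eq_ite [Nontrivial R] [DecidableEq R] [DecidablePred (· ∈ nonunits R)] (x : R) :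
    overweight x = 1 - 2 * (if x = 0 then 1 else 0 : ℝ) + (if x ∈ nonunits R then 1 else 0) := by
  by_cases h0 : x = 0
  · norm_num [overweight, h0]
  · by_cases hu : IsUnit x <;> norm_num [overweight, h0, hu, mem_nonunits_iff]

variable [IsLocalRing R]

variable (R) in
def nonunitsAddSubgroup : AddSubgroup R :=
  { IsLocalRing.nonunitsAddSubmonoid R with neg_mem' := fun hx h => hx (by simpa using h.neg) }

theorem mem_nonunitsAddSubgroup {x : R} : x ∈ nonunitsAddSubgroup R ↔ x ∈ nonunits R := Iff.rfl

theorem card_nonunitsAddSubgroup : Nat.card (nonunitsAddSubgroup R) = (nonunits R).ncard := rfl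

theorem sum_overweight_sub [DecidableEq R] [DecidableEq (R ⧸ nonunitsAddSubgroup R)]
    (C : Finset α) (g : α → R) :
    ∑ p ∈ C ×ˢ C, overweight (g p.1 - g p.2) = (#C ^ 2 : ℝ) - 2 * collisionCount C g
      + collisionCount C (((↑) : R → R ⧸ nonunitsAddSubgroup R) ∘ g) := by
  classical
  simp only [collisionCount, Function.comp_apply, QuotientAddGroup.eq_iff_sub_mem,
    mem_nonunitsAddSubgroup]
  calc ∑ p ∈ C ×ˢ C, overweight (g p.1 - g p.2)
      = ∑ p ∈ C ×ˢ C, (1 - 2 * (if g p.1 = g p.2 then 1 else 0 : ℝ)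
          + (if g p.1 - g p.2 ∈ nonunits R then 1 else 0)) := by
        simp only [overweight_eq_ite, sub_eq_zero]
    _ = _ := by
        simp only [sum_add_distrib, sum_sub_distrib, ← mul_sum, sum_boole, sum_const, card_product]
        ring

theorem sum_overweight_sub_le [Fintype R] (hJ : 2 ≤ (nonunits R).ncard) (C : Finset α)
    (g : α → R) :
    ∑ p ∈ C ×ˢ C, overweight (g p.1 - g p.2)
      ≤ 2 * (1 - 1 / ((nonunits R).ncard : ℝ)) * #C ^ 2 := by
  classical
  have hs : (2 : ℝ) ≤ (nonunits R).ncard := by exact_mod_cast hJ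
  have hPE := collisionCount_quotient_le (nonunitsAddSubgroup R) C g
  rw [card_nonunitsAddSubgroup] at hPE
  have hPM := collisionCount_le_card_sq C (((↑) : R → R ⧸ nonunitsAddSubgroup R) ∘ g)
  rw [← Nat.cast_le (α := ℝ)] at hPE hPM
  push_cast at hPE hPM
  set s : ℝ := ((nonunits R).ncard : ℝ)
  set M : ℝ := (#C : ℝ)
  set E : ℝ := (collisionCount C g : ℝ)
  set P : ℝ := (collisionCount C (((↑) : R → R ⧸ nonunitsAddSubgroup R) ∘ g) : ℝ)
  have key : s * (M ^ 2 - 2 * E + P) ≤ 2 * (s - 1) * M ^ 2 := by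
    nlinarith [mul_le_mul_of_nonneg_left hPM (by linarith : 0 ≤ s - 2)]
  rw [sum_overweight_sub]
  calc M ^ 2 - 2 * E + P ≤ 2 * (s - 1) * M ^ 2 / s := by
        rw [le_div_iff₀ (by positivity)]
        linarith
    _ = 2 * (1 - 1 / s) * M ^ 2 := by field_simp

end LocalRing

section Plotkin

variable {α : Type*}

theorem card_mul_card_sub_one_mul_le_sum_product {D : α → α → ℝ} (hD : ∀ x, D x x = 0)
    {C : Finset α} {d : ℝ} (hd : ∀ x ∈ C, ∀ y ∈ C, x ≠ y → d ≤ D x y) :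
    (#C : ℝ) * (#C - 1) * d ≤ ∑ p ∈ C ×ˢ C, D p.1 p.2 := by
  classical
  have hcard : (#C.offDiag : ℝ) = #C * (#C - 1) := by
    rw [offDiag_card, Nat.cast_sub (Nat.le_mul_self _), Nat.cast_mul]
    ring
  rw [← diag_union_offDiag, sum_union (disjoint_diag_offDiag C),
    sum_eq_zero fun p hp => by rw [(mem_diag.1 hp).2, hD], zero_add, ← hcard, ← nsmul_eq_mul]
  refine card_nsmul_le_sum _ _ _ fun p hp => ?_
  obtain ⟨hx, hy, hxy⟩ := mem_offDiag.1 hp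
  exact hd _ hx _ hy hxy

variable {R : Type*} [Ring R] {n : ℕ}

theorem owDist_self (x : Fin n → R) : owDist x x = 0 := by
  simp [owDist, overweightN, overweight]

theorem sum_owDist_le [Fintype R] [IsLocalRing R] (hJ : 2 ≤ (nonunits R).ncard)
    (C : Finset (Fin n → R)) :
    ∑ p ∈ C ×ˢ C, owDist p.1 p.2 ≤ n * (2 * (1 - 1 / ((nonunits R).ncard : ℝ)) * #C ^ 2) :=
  calc ∑ p ∈ C ×ˢ C, owDist p.1 p.2
      = ∑ i, ∑ p ∈ C ×ˢ C, overweight (p.1 i - p.2 i) := by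
        simp only [owDist, overweightN, Pi.sub_apply]
        exact sum_comm
    _ ≤ ∑ _i : Fin n, 2 * (1 - 1 / ((nonunits R).ncard : ℝ)) * #C ^ 2 :=
        sum_le_sum fun i _ => sum_overweight_sub_le hJ C fun x => x i
    _ = _ := by simp

end Plotkin

theorem plotkin_overweight_distance_form_general {R : Type*} [Ring R] [Fintype R]
    [IsLocalRing R] {n : ℕ} (hJ : 2 ≤ (nonunits R).ncard) (η : ℝ)
    (hη : η = 2 * (1 - 1 / ((nonunits R).ncard : ℝ)))
    (C : Finset (Fin n → R)) (hC : 2 ≤ C.card) (d : ℝ)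
    (hmin : ∀ x ∈ C, ∀ y ∈ C, x ≠ y → d ≤ owDist x y) :
    d ≤ (C.card : ℝ) * n * η / ((C.card : ℝ) - 1) := by
  have hM : (2 : ℝ) ≤ #C := by exact_mod_cast hC
  have hlower := card_mul_card_sub_one_mul_le_sum_product owDist_self hmin
  have hupper := sum_owDist_le hJ C
  rw [← hη] at hupper
  rw [le_div_iff₀ (by linarith)]
  refine le_of_mul_le_mul_left ?_ (by positivity : (0 : ℝ) < #C)
  linarith

/-- Plotkin bound (distance form) for the overweight: let `R` be a finite local
ring whose maximal ideal `J = nonunits R` has at least two elements, and set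
`η = 2(1 - 1/|J|)`. If a code `C ⊆ R^n` has `|C| ≥ 2` and minimum overweight
distance `d`, then `d ≤ |C| n η / (|C| - 1)`. -/
theorem plotkin_overweight_distance_form {R : Type*} [Ring R] [Fintype R]
    [IsLocalRing R] {n : ℕ} (hJ : 2 ≤ (nonunits R).ncard) (η : ℝ)
    (hη : η = 2 * (1 - 1 / ((nonunits R).ncard : ℝ)))
    (C : Finset (Fin n → R)) (hC : 2 ≤ C.card) (d : ℝ)
    (hmin : ∀ x ∈ C, ∀ y ∈ C, x ≠ y → d ≤ owDist x y)
    (hex : ∃ x ∈ C, ∃ y ∈ C, x ≠ y ∧ owDist x y = d) :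
    d ≤ (C.card : ℝ) * n * η / ((C.card : ℝ) - 1) :=
  plotkin_overweight_distance_form_general hJ η hη C hC d hmin
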